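/- arXiv:1707.08456 — 2 statements merged into one kernel-verified Lean document; each statement's English description precedes it below -/
import Mathlib

section
/- Fix N ≥ 2 and let t = ⌊N/2⌋ + 1 be the number of partitions of N with at most 2 parts. Then the characteristic polynomial of M_F^2(N) equals ∏_{k=1}^{t} (x − 4cos²(kπ/(N+2))); in particular, the eigenvalues of M_F^2(N) are exactly 4cos²(kπ/(N+2)) for k = 1, …, t, each simple, and the largest eigenvalue of M_F^2(N) is 4cos²(π/(N+2)). -/
/-- `AddBox α μ` means that the Young diagram `μ` is obtained from the Young diagram `α`
by adding a single box; equivalently, `α` is obtained from `μ` by removing a box: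
the diagram of `α` is contained in the diagram of `μ` and `μ` has exactly one more cell. -/
def AddBox (α μ : YoungDiagram) : Prop :=
  α ≤ μ ∧ μ.card = α.card + 1

/-- `MoveBox μ ν` (written `μ/ν = □` in the paper): `μ ≠ ν` and some Young diagram can be
obtained from both `μ` and `ν` by removing a single box, i.e. `μ` is obtained from `ν`
by moving a single box. -/
def MoveBox (μ ν : YoungDiagram) : Prop :=
  μ ≠ ν ∧ ∃ α : YoungDiagram, AddBox α μ ∧ AddBox α ν

/-- `nBox μ` is the number `n_μ` of Young diagrams obtained from `μ` by removing a box. -/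
noncomputable def nBox (μ : YoungDiagram) : ℕ :=
  Nat.card {α : YoungDiagram // AddBox α μ}

/-- Partitions of `N` with at most `d` parts, identified with Young diagrams with `N` boxes
whose first column has height at most `d`. -/
abbrev PartLE (N d : ℕ) : Type :=
  {μ : YoungDiagram // μ.card = N ∧ μ.colLen 0 ≤ d}

instance : DecidableEq YoungDiagram := fun μ ν =>
  decidable_of_iff (μ.cells = ν.cells) (YoungDiagram.ext_iff).symm

theorem cell_lt_card {μ : YoungDiagram} {i j : ℕ} (h : (i, j) ∈ μ.cells) :
    i < μ.card ∧ j < μ.card := by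
  rw [YoungDiagram.mem_cells] at h
  constructor
  · have hsub : Finset.range (i + 1) ×ˢ ({j} : Finset ℕ) ⊆ μ.cells := by
      rintro ⟨a, b⟩ hab
      rw [Finset.mem_product, Finset.mem_range, Finset.mem_singleton] at hab
      rw [YoungDiagram.mem_cells]
      obtain ⟨h1, h2⟩ := hab
      subst h2
      exact μ.up_left_mem (Nat.lt_succ_iff.mp h1) le_rfl h
    have := Finset.card_le_card hsub
    simpa [YoungDiagram.card] using this
  · have hsub : ({i} : Finset ℕ) ×ˢ Finset.range (j + 1) ⊆ μ.cells := by
      rintro ⟨a, b⟩ hab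
      rw [Finset.mem_product, Finset.mem_range, Finset.mem_singleton] at hab
      rw [YoungDiagram.mem_cells]
      obtain ⟨h1, h2⟩ := hab
      subst h1
      exact μ.up_left_mem le_rfl (Nat.lt_succ_iff.mp h2) h
    have := Finset.card_le_card hsub
    simpa [YoungDiagram.card] using this

noncomputable instance (N d : ℕ) : Fintype (PartLE N d) := by
  apply Fintype.ofInjective
    (β := {s : Finset (ℕ × ℕ) // s ∈ (Finset.range N ×ˢ Finset.range N).powerset})
    (f := fun μ => ⟨μ.1.cells, by
      rw [Finset.mem_powerset]
      rintro ⟨i, j⟩ hc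
      have h := cell_lt_card hc
      rw [μ.2.1] at h
      simp only [Finset.mem_product, Finset.mem_range]
      exact h⟩)
  rintro ⟨μ, hμ⟩ ⟨ν, hν⟩ h
  simp only [Subtype.mk.injEq] at h ⊢
  exact YoungDiagram.ext h

open scoped Classical in
/-- The Teleportation Matrix `M_F^d(N)`, indexed by the partitions of `N` with at most
`d` parts: the diagonal entry at `μ` is `n_μ`, the off-diagonal entry at `(μ, ν)` is `1`
if `μ/ν = □` and `0` otherwise.  For `d ≥ N` this is the full matrix `M_F(N)`. -/
noncomputable def MF (N d : ℕ) : Matrix (PartLE N d) (PartLE N d) ℝ :=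
  fun μ ν => if μ = ν then (nBox μ.1 : ℝ) else if MoveBox μ.1 ν.1 then 1 else 0

/-!
Indexing the partitions `(N - i, i)`, `0 ≤ i ≤ N / 2`, by `i`, the matrix `M_F^2(N)` becomes the
tridiagonal matrix with unit off-diagonals whose diagonal entry `[i ≠ 0] + [2 i ≠ N]` counts the
removable corners of `(N - i, i)`. If `sin ((N + 2) θ) = 0`, the vector `i ↦ sin ((2 i + 1) θ)` is
an eigenvector with eigenvalue `2 + 2 cos 2θ = 4 cos² θ`: in the interior rows this is the sine
addition formula, and in the first and last rows the missing neighbour is compensated by the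
antisymmetries `sin (-θ) = -sin θ` and `sin ((2 (N + 1 - i) + 1) θ) = -sin ((2 i + 1) θ)`.
The angles `θ = (k + 1) π / (N + 2)`, `0 ≤ k ≤ N / 2`, lie in `(0, π / 2]`, where `4 cos²` is
strictly decreasing, so they give `N / 2 + 1` distinct eigenvalues, as many as the size of the
matrix. Hence these are all the eigenvalues, each simple, and the largest one is at `k = 0`.
-/

namespace YoungDiagram

theorem rowLen_eq_of_forall_mem_iff {μ : YoungDiagram} {i n : ℕ}
    (h : ∀ j, (i, j) ∈ μ ↔ j < n) : μ.rowLen i = n :=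
  eq_of_forall_lt_iff fun j => by rw [← mem_iff_lt_rowLen, h]

theorem rowLen_le_rowLen {μ ν : YoungDiagram} (h : μ ≤ ν) (i : ℕ) : μ.rowLen i ≤ ν.rowLen i :=
  le_of_forall_lt fun _ hj => mem_iff_lt_rowLen.mp (h (mem_iff_lt_rowLen.mpr hj))

theorem colLen_le_colLen {μ ν : YoungDiagram} (h : μ ≤ ν) (j : ℕ) : μ.colLen j ≤ ν.colLen j :=
  le_of_forall_lt fun _ hi => mem_iff_lt_colLen.mp (h (mem_iff_lt_colLen.mpr hi))

/-- Rows of lengths `b + c` and `b`: parametrised this way, every pair `(b, c)` is a diagram. -/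
def twoRow (b c : ℕ) : YoungDiagram where
  cells := {0} ×ˢ Finset.range (b + c) ∪ {1} ×ˢ Finset.range b
  isLowerSet := by
    rintro ⟨i, j⟩ ⟨i', j'⟩ ⟨hi, hj⟩ h
    simp only [Finset.coe_union, Finset.coe_product, Finset.coe_singleton, Finset.coe_range,
      Set.mem_union, Set.mem_prod, Set.mem_singleton_iff, Set.mem_Iio] at h ⊢
    dsimp only at hi hj
    omega

theorem mem_twoRow {b c i j : ℕ} :
    (i, j) ∈ twoRow b c ↔ i = 0 ∧ j < b + c ∨ i = 1 ∧ j < b := by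
  rw [← mem_cells]
  simp [twoRow, and_comm, eq_comm]

theorem card_twoRow (b c : ℕ) : (twoRow b c).card = 2 * b + c := by
  rw [YoungDiagram.card, twoRow, Finset.card_union_of_disjoint (by simp [Finset.disjoint_left])]
  simp only [Finset.card_product, Finset.card_singleton, Finset.card_range]
  ring

theorem rowLen_twoRow_zero (b c : ℕ) : (twoRow b c).rowLen 0 = b + c :=
  rowLen_eq_of_forall_mem_iff fun _ => by simp [mem_twoRow]

theorem rowLen_twoRow_one (b c : ℕ) : (twoRow b c).rowLen 1 = b :=
  rowLen_eq_of_forall_mem_iff fun _ => by simp [mem_twoRow]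

theorem colLen_twoRow_zero_le (b c : ℕ) : (twoRow b c).colLen 0 ≤ 2 := by
  by_contra! h
  simpa [mem_twoRow] using mem_iff_lt_colLen.mpr h

theorem twoRow_inj {b c b' c' : ℕ} : twoRow b c = twoRow b' c' ↔ b = b' ∧ c = c' := by
  refine ⟨fun h => ?_, by rintro ⟨rfl, rfl⟩; rfl⟩
  have h0 := congrArg (rowLen · 0) h
  have h1 := congrArg (rowLen · 1) h
  simp only [rowLen_twoRow_zero, rowLen_twoRow_one] at h0 h1
  omega

theorem twoRow_le_twoRow_iff {b c b' c' : ℕ} :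
    twoRow b' c' ≤ twoRow b c ↔ b' ≤ b ∧ b' + c' ≤ b + c := by
  refine ⟨fun h => ?_, fun ⟨hb, hbc⟩ ⟨i, j⟩ hx => ?_⟩
  · have h0 := rowLen_le_rowLen h 0
    have h1 := rowLen_le_rowLen h 1
    simp only [rowLen_twoRow_zero, rowLen_twoRow_one] at h0 h1
    exact ⟨h1, h0⟩
  · rw [mem_twoRow] at hx ⊢
    omega

theorem eq_twoRow_of_colLen_le_two {μ : YoungDiagram} (h : μ.colLen 0 ≤ 2) :
    μ = twoRow (μ.rowLen 1) (μ.rowLen 0 - μ.rowLen 1) := by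
  have hanti := μ.rowLen_anti 0 1 zero_le_one
  ext ⟨i, j⟩
  rw [mem_cells, mem_cells, mem_twoRow]
  refine ⟨fun hm => ?_, ?_⟩
  · have hi : i < 2 :=
      (mem_iff_lt_colLen.mp (μ.up_left_mem le_rfl (Nat.zero_le j) hm)).trans_le h
    rw [mem_iff_lt_rowLen] at hm
    interval_cases i <;> omega
  · rintro (⟨rfl, hj⟩ | ⟨rfl, hj⟩) <;> rw [mem_iff_lt_rowLen] <;> omega

theorem card_eq_rowLen_zero_add_rowLen_one {μ : YoungDiagram} (h : μ.colLen 0 ≤ 2) :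
    μ.card = μ.rowLen 0 + μ.rowLen 1 := by
  have := μ.rowLen_anti 0 1 zero_le_one
  conv_lhs => rw [eq_twoRow_of_colLen_le_two h, card_twoRow]
  omega

end YoungDiagram

open YoungDiagram

theorem addBox_twoRow_iff {α : YoungDiagram} {b c : ℕ} :
    AddBox α (twoRow b c) ↔
      0 < c ∧ α = twoRow b (c - 1) ∨ 0 < b ∧ α = twoRow (b - 1) (c + 1) := by
  constructor
  · rintro ⟨hle, hcard⟩
    have hcol := (colLen_le_colLen hle 0).trans (colLen_twoRow_zero_le b c)
    obtain ⟨b', c', rfl⟩ : ∃ b' c', α = twoRow b' c' := ⟨_, _, eq_twoRow_of_colLen_le_two hcol⟩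
    rw [twoRow_le_twoRow_iff] at hle
    rw [card_twoRow, card_twoRow] at hcard
    simp only [twoRow_inj]
    omega
  · rintro (⟨hc, rfl⟩ | ⟨hb, rfl⟩) <;>
      exact ⟨twoRow_le_twoRow_iff.mpr (by omega), by simp only [card_twoRow]; omega⟩

theorem nBox_twoRow (b c : ℕ) :
    nBox (twoRow b c) = (if b = 0 then 0 else 1) + (if c = 0 then 0 else 1) := by
  change Nat.card {α | AddBox α (twoRow b c)} = _
  rw [Nat.card_coe_set_eq]
  simp_rw [addBox_twoRow_iff]
  rcases Nat.eq_zero_or_pos b with rfl | hb <;> rcases Nat.eq_zero_or_pos c with rfl | hc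
  · simp
  · simp [hc, hc.ne']
  · simp [hb, hb.ne']
  · have hne : twoRow b (c - 1) ≠ twoRow (b - 1) (c + 1) := by rw [Ne, twoRow_inj]; omega
    rw [show {α | 0 < c ∧ α = twoRow b (c - 1) ∨ 0 < b ∧ α = twoRow (b - 1) (c + 1)} =
      {twoRow b (c - 1), twoRow (b - 1) (c + 1)} by ext; simp [hb, hc], Set.ncard_pair hne]
    simp [hb.ne', hc.ne']

theorem MoveBox.symm {μ ν : YoungDiagram} (h : MoveBox μ ν) : MoveBox ν μ :=
  let ⟨hne, α, hμ, hν⟩ := h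
  ⟨hne.symm, α, hν, hμ⟩

theorem moveBox_twoRow_succ (b c : ℕ) : MoveBox (twoRow b (c + 2)) (twoRow (b + 1) c) :=
  ⟨by rw [Ne, twoRow_inj]; omega, twoRow b (c + 1),
    addBox_twoRow_iff.mpr (Or.inl ⟨by omega, rfl⟩),
    addBox_twoRow_iff.mpr (Or.inr ⟨by omega, rfl⟩)⟩

theorem moveBox_twoRow_iff {b c b' c' : ℕ} (h : 2 * b + c = 2 * b' + c') :
    MoveBox (twoRow b c) (twoRow b' c') ↔ b' = b + 1 ∨ b = b' + 1 := by
  constructor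
  · rintro ⟨hne, α, hα, hα'⟩
    rw [Ne, twoRow_inj] at hne
    rw [addBox_twoRow_iff] at hα hα'
    rcases hα with ⟨-, rfl⟩ | ⟨-, rfl⟩ <;> rcases hα' with ⟨-, h'⟩ | ⟨-, h'⟩ <;>
      rw [twoRow_inj] at h' <;> omega
  · rintro (rfl | rfl)
    · obtain rfl : c = c' + 2 := by omega
      exact moveBox_twoRow_succ b c'
    · obtain rfl : c' = c + 2 := by omega
      exact (moveBox_twoRow_succ b' c).symm

def twoRowEquiv (N : ℕ) : Fin (N / 2 + 1) ≃ PartLE N 2 where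
  toFun i := ⟨twoRow i (N - 2 * i), by rw [card_twoRow]; omega, colLen_twoRow_zero_le _ _⟩
  invFun μ := ⟨μ.1.rowLen 1, by
    have := card_eq_rowLen_zero_add_rowLen_one μ.2.2
    have := μ.1.rowLen_anti 0 1 zero_le_one
    omega⟩
  left_inv i := Fin.ext (rowLen_twoRow_one _ _)
  right_inv := by
    rintro ⟨μ, hN, h2⟩
    have := card_eq_rowLen_zero_add_rowLen_one h2
    refine Subtype.ext ?_
    change twoRow (μ.rowLen 1) (N - 2 * μ.rowLen 1) = μ
    conv_rhs => rw [eq_twoRow_of_colLen_le_two h2]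
    rw [twoRow_inj]
    omega

theorem MF_two_twoRowEquiv (N : ℕ) (i j : Fin (N / 2 + 1)) :
    MF N 2 (twoRowEquiv N i) (twoRowEquiv N j) =
      if i = j then ((if (i : ℕ) = 0 then 0 else 1) + (if N - 2 * i = 0 then 0 else 1) : ℝ)
      else if (j : ℕ) = i + 1 ∨ (i : ℕ) = j + 1 then 1 else 0 := by
  have hN : 2 * (i : ℕ) + (N - 2 * i) = 2 * j + (N - 2 * j) := by omega
  simp only [MF, (twoRowEquiv N).injective.eq_iff]
  split_ifs <;> simp_all [twoRowEquiv, nBox_twoRow, moveBox_twoRow_iff hN, one_add_one_eq_two]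

theorem sum_tridiagonal_mul {R : Type*} [NonAssocSemiring R] {n : ℕ} (i : Fin n) (d : R)
    (f : ℕ → R) :
    ∑ j : Fin n, (if i = j then d else if (j : ℕ) = i + 1 ∨ (i : ℕ) = j + 1 then 1 else 0) * f j =
      d * f i + (if (i : ℕ) + 1 < n then f (i + 1) else 0) +
        (if (i : ℕ) = 0 then 0 else f (i - 1)) := by
  set g : ℕ → R := fun j =>
    (if (i : ℕ) = j then d else if j = i + 1 ∨ (i : ℕ) = j + 1 then 1 else 0) * f j
  have hg (j : ℕ) : g j = (if (i : ℕ) = j then d * f j else 0) +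
      (if (i : ℕ) + 1 = j then f j else 0) + (if (i : ℕ) = j + 1 then f j else 0) := by
    simp only [g]
    split_ifs <;> first | omega | simp
  simp_rw [Fin.ext_iff]
  rw [Fin.sum_univ_eq_sum_range g n]
  simp_rw [hg, Finset.sum_add_distrib, Finset.sum_ite_eq, Finset.mem_range]
  rcases i with ⟨_ | i, hi⟩
  · simp [hi]
  · simp [hi, (Nat.lt_succ_self i).trans hi]

open Real Matrix

open Polynomial in
theorem Matrix.charpoly_eq_prod_of_isRoot {K n ι : Type*} [Field K] [Fintype n] [DecidableEq n]
    (M : Matrix n n K) {s : Finset ι} {f : ι → K} (hf : Set.InjOn f s)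
    (hcard : Fintype.card n ≤ s.card) (hroot : ∀ i ∈ s, M.charpoly.IsRoot (f i)) :
    M.charpoly = ∏ i ∈ s, (X - C (f i)) := by
  have hmonic : ∀ i ∈ s, (X - C (f i)).Monic := fun i _ => monic_X_sub_C (f i)
  refine eq_of_monic_of_dvd_of_natDegree_le (monic_prod_of_monic _ _ hmonic) M.charpoly_monic
    (Finset.prod_dvd_of_coprime (fun i hi j hj hij => ?_)
      fun i hi => dvd_iff_isRoot.mpr (hroot i hi)) ?_
  · exact isCoprime_X_sub_C_of_isUnit_sub (sub_ne_zero_of_ne (hf.ne hi hj hij)).isUnit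
  · rw [charpoly_natDegree_eq_dim, natDegree_prod_of_monic _ _ hmonic]
    simpa using hcard

theorem Matrix.isRoot_charpoly_iff {K n : Type*} [Field K] [Fintype n] [DecidableEq n]
    (M : Matrix n n K) (μ : K) : M.charpoly.IsRoot μ ↔ ∃ v ≠ 0, M *ᵥ v = μ • v := by
  rw [← charpoly_toLin', ← Module.End.hasEigenvalue_iff_isRoot_charpoly,
    Module.End.hasEigenvalue_iff, Submodule.ne_bot_iff]
  simp only [Module.End.mem_eigenspace_iff, toLin'_apply]
  exact exists_congr fun v => and_comm

theorem Real.strictAntiOn_four_mul_cos_sq :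
    StrictAntiOn (fun x => 4 * cos x ^ 2) (Set.Icc 0 (π / 2)) := by
  rintro x ⟨hx0, hx⟩ y ⟨hy0, hy⟩ hxy
  have := strictAntiOn_cos (show 2 * x ∈ Set.Icc 0 π from ⟨by linarith, by linarith⟩)
    (show 2 * y ∈ Set.Icc 0 π from ⟨by linarith, by linarith⟩) (by linarith)
  simp only [cos_sq x, cos_sq y]
  linarith

theorem strictAntiOn_four_mul_cos_sq_mul_pi_div (N : ℕ) :
    StrictAntiOn (fun k : ℕ => 4 * cos (((k : ℝ) + 1) * π / ((N : ℝ) + 2)) ^ 2)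
      (Set.Iic (N / 2)) := by
  have hN : (0 : ℝ) < N + 2 := by positivity
  have hmem (k : ℕ) (hk : k ∈ Set.Iic (N / 2)) :
      ((k : ℝ) + 1) * π / ((N : ℝ) + 2) ∈ Set.Icc 0 (π / 2) := by
    have : 2 * ((k : ℝ) + 1) ≤ N + 2 := by
      have : 2 * (k + 1) ≤ N + 2 := by rw [Set.mem_Iic] at hk; omega
      exact_mod_cast this
    refine ⟨by positivity, ?_⟩
    rw [div_le_div_iff₀ hN two_pos]
    nlinarith [pi_pos]
  intro k hk l hl hkl
  refine strictAntiOn_four_mul_cos_sq (hmem k hk) (hmem l hl) ?_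
  gcongr

theorem submatrix_MF_two_mulVec_apply (N : ℕ) (f : ℕ → ℝ) (i : Fin (N / 2 + 1)) :
    ((MF N 2).submatrix (twoRowEquiv N) (twoRowEquiv N) *ᵥ fun j => f j) i =
      ((if (i : ℕ) = 0 then 0 else 1) + (if N - 2 * i = 0 then 0 else 1)) * f i +
        (if (i : ℕ) + 1 < N / 2 + 1 then f (i + 1) else 0) +
          (if (i : ℕ) = 0 then 0 else f (i - 1)) := by
  simp only [mulVec, dotProduct, submatrix_apply, MF_two_twoRowEquiv]
  exact sum_tridiagonal_mul i _ f

theorem Real.sin_add_sin_of_eq {x y a b : ℝ} (ha : x + y = 2 * a) (hb : x - y = 2 * b) :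
    sin x + sin y = 2 * sin a * cos b := by
  rw [sin_add_sin, ha, hb, mul_div_cancel_left₀ _ two_ne_zero,
    mul_div_cancel_left₀ _ two_ne_zero]

theorem submatrix_MF_two_mulVec_sine (N : ℕ) {θ : ℝ} (hθ : sin ((N + 2) * θ) = 0) :
    (MF N 2).submatrix (twoRowEquiv N) (twoRowEquiv N) *ᵥ
        (fun j : Fin (N / 2 + 1) => sin ((2 * (j : ℕ) + 1) * θ)) =
      (4 * cos θ ^ 2) • fun j : Fin (N / 2 + 1) => sin ((2 * (j : ℕ) + 1) * θ) := by
  set f : ℕ → ℝ := fun n => sin ((2 * n + 1) * θ) with hf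
  have hrec (n : ℕ) : f n + f (n + 2) = (4 * cos θ ^ 2 - 2) * f (n + 1) := by
    rw [hf, sin_add_sin_of_eq (a := (2 * (n + 1 : ℕ) + 1) * θ) (b := -(2 * θ))
      (by push_cast; ring) (by push_cast; ring), cos_neg, cos_two_mul]
    ring
  have hone : f 1 = (4 * cos θ ^ 2 - 1) * f 0 := by
    have h0 : f 0 = sin θ := by simp [hf]
    have h1 : f 1 = sin (3 * θ) := by norm_num [hf]
    have := sin_add_sin_of_eq (x := 3 * θ) (y := -θ) (a := θ) (b := 2 * θ) (by ring) (by ring)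
    rw [sin_neg, cos_two_mul] at this
    rw [h0, h1]
    linarith
  have hrefl (n m : ℕ) (h : n + m = N + 1) : f n = -f m := by
    have h' : (n : ℝ) + m = N + 1 := by exact_mod_cast h
    rw [eq_neg_iff_add_eq_zero, hf, sin_add_sin_of_eq (a := (N + 2) * θ) (b := (n - m : ℝ) * θ)
      (by linear_combination 2 * θ * h') (by ring), hθ]
    ring
  change _ *ᵥ (fun j : Fin (N / 2 + 1) => f j) =
    (4 * cos θ ^ 2) • fun j : Fin (N / 2 + 1) => f j
  clear_value f
  funext i
  rw [submatrix_MF_two_mulVec_apply N f i, Pi.smul_apply, smul_eq_mul]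
  rcases i with ⟨_ | i, hi⟩
  · obtain rfl | rfl | hN : N = 0 ∨ N = 1 ∨ 2 ≤ N := by omega
    · have := hrefl 0 1 rfl
      simp only [add_assoc, Nat.reduceAdd]
      split_ifs <;> first | contradiction | omega | linarith
    · have := hrefl 1 1 rfl
      simp only [add_assoc, Nat.reduceAdd]
      split_ifs <;> first | contradiction | omega | linarith
    · simp only [add_assoc, Nat.reduceAdd]
      split_ifs <;> first | contradiction | omega | linarith
  · have := hrec i
    obtain hN | rfl | rfl : 2 * (i + 2) ≤ N ∨ N = 2 * i + 2 ∨ N = 2 * i + 3 := by omega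
    · simp only [add_assoc, Nat.reduceAdd, Nat.add_sub_cancel]
      split_ifs <;> first | contradiction | omega | linarith
    · have := hrefl (i + 2) (i + 1) (by omega)
      simp only [add_assoc, Nat.reduceAdd, Nat.add_sub_cancel]
      split_ifs <;> first | contradiction | omega | linarith
    · have := hrefl (i + 2) (i + 2) (by omega)
      simp only [add_assoc, Nat.reduceAdd, Nat.add_sub_cancel]
      split_ifs <;> first | contradiction | omega | linarith

theorem isRoot_charpoly_MF_two (N : ℕ) {k : ℕ} (hk : k ≤ N / 2) :
    (MF N 2).charpoly.IsRoot (4 * cos (((k : ℝ) + 1) * π / ((N : ℝ) + 2)) ^ 2) := by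
  set θ := ((k : ℝ) + 1) * π / ((N : ℝ) + 2)
  have hθ : sin ((N + 2) * θ) = 0 := by
    rw [mul_div_cancel₀ _ (by positivity), show (k : ℝ) + 1 = (k + 1 : ℕ) by push_cast; ring]
    exact sin_nat_mul_pi (k + 1)
  have hθπ : θ < π := by
    rw [div_lt_iff₀ (by positivity)]
    have : (k : ℝ) + 1 < N + 2 := by
      have : k + 1 < N + 2 := by omega
      exact_mod_cast this
    nlinarith [pi_pos]
  rw [← charpoly_reindex (twoRowEquiv N).symm, isRoot_charpoly_iff]
  refine ⟨_, fun h => ?_, submatrix_MF_two_mulVec_sine N hθ⟩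
  have := congrFun h 0
  simp only [Fin.val_zero, CharP.cast_eq_zero, mul_zero, zero_add, one_mul, Pi.zero_apply] at this
  exact (sin_pos_of_pos_of_lt_pi (by positivity) hθπ).ne' this

open Polynomial Real in
theorem charpoly_MF_two_general (N : ℕ) :
    (MF N 2).charpoly =
        ∏ k ∈ Finset.range (N / 2 + 1),
          (X - C (4 * Real.cos (((k : ℝ) + 1) * π / ((N : ℝ) + 2)) ^ 2)) ∧
      IsGreatest {lam : ℝ | ∃ v : PartLE N 2 → ℝ, v ≠ 0 ∧ (MF N 2).mulVec v = lam • v}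
        (4 * Real.cos (π / ((N : ℝ) + 2)) ^ 2) := by
  have hrange (k : ℕ) : k ∈ Finset.range (N / 2 + 1) ↔ k ∈ Set.Iic (N / 2) := by
    rw [Finset.mem_range, Set.mem_Iic, Nat.lt_succ_iff]
  have hanti := strictAntiOn_four_mul_cos_sq_mul_pi_div N
  have hchar := (MF N 2).charpoly_eq_prod_of_isRoot (s := Finset.range (N / 2 + 1))
    (hanti.injOn.mono fun k hk => (hrange k).mp hk)
    (by rw [Fintype.card_congr (twoRowEquiv N).symm]; simp)
    fun k hk => isRoot_charpoly_MF_two N ((hrange k).mp hk)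
  have heig : {lam : ℝ | ∃ v : PartLE N 2 → ℝ, v ≠ 0 ∧ (MF N 2).mulVec v = lam • v} =
      (fun k : ℕ => 4 * cos (((k : ℝ) + 1) * π / ((N : ℝ) + 2)) ^ 2) '' Set.Iic (N / 2) := by
    ext lam
    rw [Set.mem_ofPred_eq, ← isRoot_charpoly_iff, hchar, IsRoot, eval_prod,
      Finset.prod_eq_zero_iff]
    simp only [eval_sub, eval_X, eval_C, sub_eq_zero, Set.mem_image]
    exact exists_congr fun k => and_congr (hrange k) eq_comm
  refine ⟨hchar, ?_⟩
  rw [heig]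
  simpa only [Nat.cast_zero, zero_add, one_mul] using
    hanti.antitoneOn.map_isLeast (a := 0) ⟨Nat.zero_le _, fun k _ => Nat.zero_le k⟩

open Polynomial Real in
/-- Fix `N ≥ 2` and let `t = ⌊N/2⌋ + 1` be the number of partitions of `N` with at most two
parts.  The characteristic polynomial of `M_F^2(N)` equals
`∏_{k=1}^{t} (x - 4cos²(kπ/(N+2)))`; in particular the eigenvalues of `M_F^2(N)` are exactly
the simple eigenvalues `4cos²(kπ/(N+2))`, `k = 1, …, t`, and the largest eigenvalue of
`M_F^2(N)` is `4cos²(π/(N+2))`. -/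
theorem charpoly_MF_two (N : ℕ) (hN : 2 ≤ N) :
    (MF N 2).charpoly =
        ∏ k ∈ Finset.range (N / 2 + 1),
          (X - C (4 * Real.cos (((k : ℝ) + 1) * π / ((N : ℝ) + 2)) ^ 2)) ∧
      IsGreatest {lam : ℝ | ∃ v : PartLE N 2 → ℝ, v ≠ 0 ∧ (MF N 2).mulVec v = lam • v}
        (4 * Real.cos (π / ((N : ℝ) + 2)) ^ 2) :=
  charpoly_MF_two_general N
end

section
/- Let A be an n × n real matrix (n ≥ 1) with nonnegative entries that is positive semidefinite (in particular symmetric) and primitive, i.e., there exists q ≥ 1 such that every entry of A^q is strictly positive. Let r(A) denote its spectral radius (equal to its largest eigenvalue). Then there exists a vector x ∈ ℝ^n with strictly positive entries summing to 1 such that A x = r(A) x, and for every initial vector w⁰ ∈ ℝ^n with strictly positive entries summing to 1, the sequences defined by v^{m+1} = A w^m and w^{m+1} = v^{m+1} / (Σ_j (v^{m+1})_j) for m = 0, 1, 2, … are well defined (every denominator is strictly positive), the vectors w^m converge to x as m → ∞, and the scalars Σ_j (v^m)_j converge to r(A) as m → ∞. -/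
/-!
Since `r` dominates every eigenvalue, `r • 1 - A` is positive semidefinite. For an
`r`-eigenvector `z`, nonnegativity of `A` gives `z ⬝ᵥ A z ≤ |z| ⬝ᵥ A |z|`, so `|z|` is again an
`r`-eigenvector, and a positive power of `A` shows that it is strictly positive. Hence no nonzero
`r`-eigenvector has a zero entry, the `r`-eigenspace is the line through a positive vector `x`,
and `r` is a simple eigenvalue, while positive semidefiniteness puts every other eigenvalue in
`[0, r)`. Expanding in an orthonormal eigenbasis, `r⁻ᵐ • Aᵐ w⁰` tends to a positive multiple of
`x`, and `wᵐ` is the normalization of `Aᵐ w⁰`.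
-/

open Filter Topology Matrix

theorem tendsto_of_sum_eq_one_of_tendsto_smul {ι : Type*} [Fintype ι] {u w : ℕ → ι → ℝ}
    {x : ι → ℝ} {s : ℝ} (hs : s ≠ 0) (hx : ∑ i, x i = 1) (hu : Tendsto u atTop (𝓝 (s • x)))
    (hw : ∀ m, ∃ c : ℝ, w m = c • u m) (hsum : ∀ m, ∑ i, w m i = 1) :
    Tendsto w atTop (𝓝 x) := by
  have hw_eq : ∀ m, w m = (∑ i, u m i)⁻¹ • u m := fun m => by
    obtain ⟨c, hc⟩ := hw m
    have h : c * ∑ i, u m i = 1 := by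
      rw [← hsum m, hc]
      simp only [Pi.smul_apply, smul_eq_mul, Finset.mul_sum]
    rw [hc, eq_inv_of_mul_eq_one_left h]
  have hu_sum : Tendsto (fun m => ∑ i, u m i) atTop (𝓝 s) := by
    simpa [← Finset.mul_sum, hx] using
      tendsto_finsetSum Finset.univ fun i _ => tendsto_pi_nhds.mp hu i
  have h := (hu_sum.inv₀ hs).smul hu
  rw [smul_smul, inv_mul_cancel₀ hs, one_smul] at h
  exact h.congr fun m => (hw_eq m).symm

namespace Matrix

variable {ι : Type*} [Fintype ι]

theorem pow_mulVec_eq_pow_smul {R : Type*} [DecidableEq ι] [CommSemiring R] {A : Matrix ι ι R}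
    {v : ι → R} {c : R} (h : A *ᵥ v = c • v) (m : ℕ) : A ^ m *ᵥ v = c ^ m • v := by
  induction m with
  | zero => simp
  | succ m ih => rw [pow_succ', ← mulVec_mulVec, ih, mulVec_smul, h, smul_smul, pow_succ]

theorem exists_eq_smul_pow_mulVec {K : Type*} [DecidableEq ι] [Field K] (A : Matrix ι ι K)
    {w v : ℕ → ι → K} (hv : ∀ m, v (m + 1) = A *ᵥ w m)
    (hw : ∀ m, w (m + 1) = (∑ j, v (m + 1) j)⁻¹ • v (m + 1)) (m : ℕ) :
    ∃ c : K, w m = c • (A ^ m *ᵥ w 0) := by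
  induction m with
  | zero => exact ⟨1, by simp⟩
  | succ m ih =>
    obtain ⟨c, hc⟩ := ih
    refine ⟨(∑ j, v (m + 1) j)⁻¹ * c, ?_⟩
    rw [hw, hv, hc, mulVec_smul, mulVec_mulVec, ← pow_succ', smul_smul]

theorem mulVec_nonneg {κ : Type*} {A : Matrix κ ι ℝ} (hA : ∀ i j, 0 ≤ A i j) {u : ι → ℝ}
    (hu : 0 ≤ u) : 0 ≤ A *ᵥ u :=
  fun i => Finset.sum_nonneg fun j _ => mul_nonneg (hA i j) (hu j)

theorem dotProduct_pos {x u : ι → ℝ} (hx : ∀ i, 0 < x i) (hu : 0 < u) : 0 < x ⬝ᵥ u := by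
  obtain ⟨hu0, j, hj⟩ := Pi.lt_def.mp hu
  exact Finset.sum_pos' (fun i _ => mul_nonneg (hx i).le (hu0 i))
    ⟨j, Finset.mem_univ _, mul_pos (hx j) hj⟩

theorem dotProduct_mulVec_le_abs {A : Matrix ι ι ℝ} (hA : ∀ i j, 0 ≤ A i j) (z : ι → ℝ) :
    z ⬝ᵥ A *ᵥ z ≤ |z| ⬝ᵥ A *ᵥ |z| := by
  simp only [dotProduct, mulVec, Finset.mul_sum, Pi.abs_apply]
  refine Finset.sum_le_sum fun i _ => Finset.sum_le_sum fun j _ => ?_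
  calc z i * (A i j * z j) ≤ |z i * (A i j * z j)| := le_abs_self _
    _ = |z i| * (A i j * |z j|) := by rw [abs_mul, abs_mul, abs_of_nonneg (hA i j)]

theorem mulVec_abs_eq_smul [DecidableEq ι] {A : Matrix ι ι ℝ} (hA : ∀ i j, 0 ≤ A i j) {r : ℝ}
    (hr : (r • 1 - A).PosSemidef) {z : ι → ℝ} (hz : A *ᵥ z = r • z) :
    A *ᵥ |z| = r • |z| := by
  have habs : |z| ⬝ᵥ |z| = z ⬝ᵥ z :=
    Finset.sum_congr rfl fun i _ => by rw [Pi.abs_apply, abs_mul_abs_self]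
  have hform : ∀ p : ι → ℝ, p ⬝ᵥ (r • 1 - A) *ᵥ p = r * (p ⬝ᵥ p) - p ⬝ᵥ A *ᵥ p := fun p => by
    rw [sub_mulVec, smul_mulVec, one_mulVec, dotProduct_sub, dotProduct_smul, smul_eq_mul]
  have hle : |z| ⬝ᵥ (r • 1 - A) *ᵥ |z| ≤ 0 := by
    have := dotProduct_mulVec_le_abs hA z
    rw [hz, dotProduct_smul, smul_eq_mul] at this
    rw [hform, habs]
    linarith
  have hzero := le_antisymm hle (by simpa using hr.dotProduct_mulVec_nonneg |z|)
  have := (hr.dotProduct_mulVec_zero_iff |z|).mp (by simpa using hzero)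
  rw [sub_mulVec, smul_mulVec, one_mulVec, sub_eq_zero] at this
  exact this.symm

namespace IsHermitian

variable [DecidableEq ι] {A : Matrix ι ι ℝ} (hA : A.IsHermitian)
include hA

theorem dotProduct_eigenvectorBasis (k l : ι) :
    ⇑(hA.eigenvectorBasis k) ⬝ᵥ ⇑(hA.eigenvectorBasis l) = if k = l then 1 else 0 := by
  rw [← orthonormal_iff_ite.mp hA.eigenvectorBasis.orthonormal k l, dotProduct_comm]
  simp [EuclideanSpace.inner_eq_star_dotProduct]

theorem eigenvectorBasis_ne_zero (k : ι) : ⇑(hA.eigenvectorBasis k) ≠ 0 := fun h => by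
  simpa [h] using hA.dotProduct_eigenvectorBasis k k

theorem sum_dotProduct_smul_eigenvectorBasis (p : ι → ℝ) :
    ∑ k, (⇑(hA.eigenvectorBasis k) ⬝ᵥ p) • ⇑(hA.eigenvectorBasis k) = p := by
  have h := congrArg WithLp.ofLp (hA.eigenvectorBasis.sum_repr' (WithLp.toLp 2 p))
  simpa [EuclideanSpace.inner_eq_star_dotProduct, dotProduct_comm] using h

theorem pow_mulVec_eq_sum (m : ℕ) (p : ι → ℝ) :
    A ^ m *ᵥ p = ∑ k, (hA.eigenvalues k ^ m * (⇑(hA.eigenvectorBasis k) ⬝ᵥ p)) •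
      ⇑(hA.eigenvectorBasis k) := by
  conv_lhs => rw [← hA.sum_dotProduct_smul_eigenvectorBasis p]
  simp only [mulVec_sum, mulVec_smul,
    pow_mulVec_eq_pow_smul (hA.mulVec_eigenvectorBasis _), smul_smul, mul_comm]

theorem dotProduct_pow_mulVec_eq_sum (m : ℕ) (p : ι → ℝ) :
    p ⬝ᵥ A ^ m *ᵥ p = ∑ k, hA.eigenvalues k ^ m * (⇑(hA.eigenvectorBasis k) ⬝ᵥ p) ^ 2 := by
  rw [hA.pow_mulVec_eq_sum m p, dotProduct_sum]
  refine Finset.sum_congr rfl fun k _ => ?_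
  rw [dotProduct_smul, smul_eq_mul, dotProduct_comm, mul_assoc, sq]

theorem posSemidef_smul_one_sub {r : ℝ} (h : ∀ k, hA.eigenvalues k ≤ r) :
    (r • 1 - A).PosSemidef := by
  refine .of_dotProduct_mulVec_nonneg ((isHermitian_one.smul (.all r)).sub hA) fun p => ?_
  have h0 := hA.dotProduct_pow_mulVec_eq_sum 0 p
  have h1 := hA.dotProduct_pow_mulVec_eq_sum 1 p
  simp only [pow_zero, pow_one, one_mulVec, one_mul] at h0 h1
  rw [star_trivial, sub_mulVec, smul_mulVec, one_mulVec, dotProduct_sub, dotProduct_smul, h0, h1,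
    smul_eq_mul, Finset.mul_sum, ← Finset.sum_sub_distrib]
  exact Finset.sum_nonneg fun k _ => by
    nlinarith [h k, sq_nonneg (⇑(hA.eigenvectorBasis k) ⬝ᵥ p)]

theorem tendsto_inv_pow_smul_pow_mulVec {r : ℝ} (hr : r ≠ 0) {k₀ : ι}
    (hk₀ : hA.eigenvalues k₀ = r) (hgap : ∀ k ≠ k₀, |hA.eigenvalues k| < |r|) (p : ι → ℝ) :
    Tendsto (fun m => (r ^ m)⁻¹ • (A ^ m *ᵥ p)) atTop
      (𝓝 ((⇑(hA.eigenvectorBasis k₀) ⬝ᵥ p) • ⇑(hA.eigenvectorBasis k₀))) := by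
  have hratio : ∀ k, Tendsto (fun m => (hA.eigenvalues k / r) ^ m) atTop
      (𝓝 (if k = k₀ then 1 else 0)) := by
    intro k
    split_ifs with hk
    · simp [hk, hk₀, hr]
    · refine tendsto_pow_atTop_nhds_zero_of_abs_lt_one ?_
      rw [abs_div, div_lt_one (abs_pos.mpr hr)]
      exact hgap k hk
  have hsum := tendsto_finsetSum Finset.univ fun k _ =>
    ((hratio k).mul_const (⇑(hA.eigenvectorBasis k) ⬝ᵥ p)).smul_const ⇑(hA.eigenvectorBasis k)
  simp only [ite_mul, one_mul, zero_mul, ite_smul, zero_smul, Finset.sum_ite_eq',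
    Finset.mem_univ, if_true] at hsum
  refine hsum.congr fun m => ?_
  rw [hA.pow_mulVec_eq_sum, Finset.smul_sum]
  refine Finset.sum_congr rfl fun k _ => ?_
  rw [smul_smul, div_pow, div_eq_inv_mul, mul_assoc]

end IsHermitian

namespace IsPrimitive

variable [DecidableEq ι] {A : Matrix ι ι ℝ} (hA : A.IsPrimitive)
include hA

theorem mulVec_pos {u : ι → ℝ} (hu : 0 < u) : 0 < A *ᵥ u := by
  obtain ⟨hnonneg, q, hq, hpos⟩ := hA
  refine (mulVec_nonneg hnonneg hu.le).lt_of_ne fun h => ?_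
  obtain ⟨-, i, -⟩ := Pi.lt_def.mp hu
  have := dotProduct_pos (hpos i) hu
  rw [← mulVec, ← Nat.sub_add_cancel hq, pow_succ, ← mulVec_mulVec, ← h, mulVec_zero] at this
  exact lt_irrefl _ this

theorem pos_of_mulVec_eq_smul {u : ι → ℝ} (hu : 0 < u) {r : ℝ} (h : A *ᵥ u = r • u) :
    0 < r ∧ ∀ i, 0 < u i := by
  have hr : 0 < r := by
    obtain ⟨-, i, hi⟩ := Pi.lt_def.mp (h ▸ hA.mulVec_pos hu)
    exact pos_of_mul_pos_left hi (hu.le i)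
  refine ⟨hr, fun i => ?_⟩
  obtain ⟨-, q, -, hpos⟩ := hA
  have := dotProduct_pos (hpos i) hu
  rw [← mulVec, pow_mulVec_eq_pow_smul h, Pi.smul_apply, smul_eq_mul] at this
  exact pos_of_mul_pos_right this (pow_nonneg hr.le q)

theorem pos_and_sum_eq_one_of_iterate {w v : ℕ → ι → ℝ} (hw0 : 0 ≤ w 0)
    (hsum0 : ∑ i, w 0 i = 1) (hv : ∀ m, v (m + 1) = A *ᵥ w m)
    (hw : ∀ m, w (m + 1) = (∑ j, v (m + 1) j)⁻¹ • v (m + 1)) (m : ℕ) :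
    0 < w m ∧ ∑ i, w m i = 1 := by
  have hpos : ∀ u : ι → ℝ, 0 ≤ u → ∑ i, u i = 1 → 0 < u := fun u hu hs =>
    hu.lt_of_ne (by rintro rfl; simp at hs)
  induction m with
  | zero => exact ⟨hpos _ hw0 hsum0, hsum0⟩
  | succ m ih =>
    have hs : 0 < ∑ j, v (m + 1) j := by
      rw [hv]
      exact Fintype.sum_pos (hA.mulVec_pos ih.1)
    have hsum : ∑ i, w (m + 1) i = 1 := by
      simp only [hw m, Pi.smul_apply, smul_eq_mul, ← Finset.mul_sum, inv_mul_cancel₀ hs.ne']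
    refine ⟨hpos _ ?_ hsum, hsum⟩
    rw [hw m]
    exact smul_nonneg (inv_nonneg.mpr hs.le) (hv m ▸ mulVec_nonneg hA.nonneg ih.1.le)

variable {r : ℝ} (hr : (r • 1 - A).PosSemidef)
include hr

theorem apply_ne_zero_of_mulVec_eq_smul {z : ι → ℝ} (hz0 : z ≠ 0) (hz : A *ᵥ z = r • z)
    (i : ι) : z i ≠ 0 := by
  have habs : 0 < |z| := (abs_nonneg z).lt_of_ne (Ne.symm ((Pi.abs_eq_zero z).not.mpr hz0))
  exact abs_pos.mp ((hA.pos_of_mulVec_eq_smul habs (mulVec_abs_eq_smul hA.nonneg hr hz)).2 i)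

theorem exists_eq_smul_of_mulVec_eq_smul {a b : ι → ℝ} (ha0 : a ≠ 0) (ha : A *ᵥ a = r • a)
    (hb : A *ᵥ b = r • b) : ∃ t : ℝ, b = t • a := by
  obtain ⟨i, hi⟩ := Function.ne_iff.mp ha0
  set c := b - (b i / a i) • a
  have hc : A *ᵥ c = r • c := by
    rw [mulVec_sub, mulVec_smul, ha, hb, smul_sub, smul_comm]
  have hci : c i = 0 := by
    simp [c, div_mul_cancel₀ _ hi]
  refine ⟨b i / a i, sub_eq_zero.mp ?_⟩
  by_contra hc0
  exact hA.apply_ne_zero_of_mulVec_eq_smul hr hc0 hc i hci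

theorem exists_pos_eigenvector {z : ι → ℝ} (hz0 : z ≠ 0) (hz : A *ᵥ z = r • z) :
    0 < r ∧ ∃ x : ι → ℝ, (∀ i, 0 < x i) ∧ ∑ i, x i = 1 ∧ A *ᵥ x = r • x := by
  have habs : 0 < |z| := (abs_nonneg z).lt_of_ne (Ne.symm ((Pi.abs_eq_zero z).not.mpr hz0))
  have hz' := mulVec_abs_eq_smul hA.nonneg hr hz
  obtain ⟨hr0, hpos⟩ := hA.pos_of_mulVec_eq_smul habs hz'
  have hsum : 0 < ∑ i, |z| i := Fintype.sum_pos habs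
  refine ⟨hr0, (∑ i, |z| i)⁻¹ • |z|, fun i => mul_pos (inv_pos.mpr hsum) (hpos i), ?_, ?_⟩
  · simp only [Pi.smul_apply, smul_eq_mul, ← Finset.mul_sum, inv_mul_cancel₀ hsum.ne']
  · rw [mulVec_smul, hz', smul_comm]

theorem existsUnique_eigenvalues_eq (hH : A.IsHermitian) {z : ι → ℝ} (hz0 : z ≠ 0)
    (hz : A *ᵥ z = r • z) : ∃! k, hH.eigenvalues k = r := by
  have hspec : r ∈ spectrum ℝ A := by
    rw [← spectrum_toLin', ← Module.End.hasEigenvalue_iff_mem_spectrum]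
    exact Module.End.hasEigenvalue_of_hasEigenvector
      ⟨Module.End.mem_eigenspace_iff.mpr (by rwa [toLin'_apply]), hz0⟩
  obtain ⟨k, hk⟩ := (hH.spectrum_real_eq_range_eigenvalues ▸ hspec : r ∈ Set.range _)
  refine ⟨k, hk, fun l hl => by_contra fun hlk => ?_⟩
  obtain ⟨t, ht⟩ := hA.exists_eq_smul_of_mulVec_eq_smul hr (hH.eigenvectorBasis_ne_zero k)
    (hk ▸ hH.mulVec_eigenvectorBasis k) (hl ▸ hH.mulVec_eigenvectorBasis l)
  have horth := hH.dotProduct_eigenvectorBasis k l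
  rw [if_neg (Ne.symm hlk), ht, dotProduct_smul, hH.dotProduct_eigenvectorBasis, if_pos rfl,
    smul_eq_mul, mul_one] at horth
  exact hH.eigenvectorBasis_ne_zero l (by rw [ht, horth, zero_smul])

end IsPrimitive

end Matrix

theorem perron_power_iteration_general (n : ℕ) (A : Matrix (Fin n) (Fin n) ℝ)
    (hnonneg : ∀ i j, 0 ≤ A i j) (hpsd : A.PosSemidef)
    (hprim : ∃ q : ℕ, 1 ≤ q ∧ ∀ i j, 0 < (A ^ q) i j)
    (r : ℝ)
    (hr : IsGreatest {lam : ℝ | ∃ v : Fin n → ℝ, v ≠ 0 ∧ A.mulVec v = lam • v} r) :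
    ∃ x : Fin n → ℝ, (∀ i, 0 < x i) ∧ (∑ i, x i = 1) ∧ A.mulVec x = r • x ∧
      ∀ w v : ℕ → Fin n → ℝ,
        (∀ i, 0 < w 0 i) → (∑ i, w 0 i = 1) →
        (∀ m : ℕ, v (m + 1) = A.mulVec (w m)) →
        (∀ m : ℕ, w (m + 1) = (∑ j, v (m + 1) j)⁻¹ • v (m + 1)) →
        (∀ m : ℕ, 0 < ∑ j, v (m + 1) j) ∧
          Tendsto w atTop (nhds x) ∧
          Tendsto (fun m => ∑ j, v (m + 1) j) atTop (nhds r) := by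
  have hA : A.IsPrimitive := ⟨hnonneg, hprim⟩
  have hH : A.IsHermitian := hpsd.1
  have hle : ∀ k, hH.eigenvalues k ≤ r := fun k =>
    hr.2 ⟨_, hH.eigenvectorBasis_ne_zero k, hH.mulVec_eigenvectorBasis k⟩
  have hB := hH.posSemidef_smul_one_sub hle
  obtain ⟨z, hz0, hz⟩ := hr.1
  obtain ⟨hr0, x, hxpos, hxsum, hx⟩ := hA.exists_pos_eigenvector hB hz0 hz
  obtain ⟨k₀, hk₀, hk₀_unique⟩ := hA.existsUnique_eigenvalues_eq hB hH hz0 hz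
  have hgap : ∀ k ≠ k₀, |hH.eigenvalues k| < |r| := fun k hk => by
    rw [abs_of_nonneg (hpsd.eigenvalues_nonneg k), abs_of_pos hr0]
    exact (hle k).lt_of_ne fun h => hk (hk₀_unique k h)
  obtain ⟨t, ht⟩ := hA.exists_eq_smul_of_mulVec_eq_smul hB (fun h => by simp [h] at hxsum) hx
    (hk₀ ▸ hH.mulVec_eigenvectorBasis k₀)
  refine ⟨x, hxpos, hxsum, hx, fun w v hw0 hw0sum hv hw => ?_⟩
  have hiter := hA.pos_and_sum_eq_one_of_iterate (fun i => (hw0 i).le) hw0sum hv hw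
  have hlim := hH.tendsto_inv_pow_smul_pow_mulVec hr0.ne' hk₀ hgap (w 0)
  rw [ht, smul_dotProduct, smul_smul, smul_eq_mul] at hlim
  have ht0 : t ≠ 0 := by rintro rfl; exact hH.eigenvectorBasis_ne_zero k₀ (by simp [ht])
  have hwx : Tendsto w atTop (𝓝 x) := by
    refine tendsto_of_sum_eq_one_of_tendsto_smul ?_ hxsum hlim (fun m => ?_) (fun m => (hiter m).2)
    · exact mul_ne_zero (mul_ne_zero ht0 (dotProduct_pos hxpos (hiter 0).1).ne') ht0
    · obtain ⟨c, hc⟩ := exists_eq_smul_pow_mulVec A hv hw m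
      refine ⟨c * r ^ m, ?_⟩
      rw [hc, smul_smul, mul_assoc, mul_inv_cancel₀ (pow_ne_zero m hr0.ne'), mul_one]
  refine ⟨fun m => by rw [hv]; exact Fintype.sum_pos (hA.mulVec_pos (hiter m).1), hwx, ?_⟩
  have hcont : Continuous fun u : Fin n → ℝ => ∑ j, (A *ᵥ u) j := by fun_prop
  simpa [Function.comp_def, hv, hx, ← Finset.mul_sum, hxsum] using (hcont.tendsto x).comp hwx

/-- Let `A` be an `n × n` real matrix (`n ≥ 1`) with nonnegative entries which is positive
semidefinite and primitive (some power of `A` has all entries strictly positive), and let `r`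
be its spectral radius, equal to its largest eigenvalue.  Then there is a Perron eigenvector
`x` with strictly positive entries summing to `1` satisfying `A x = r x`, and for every initial
vector `w⁰` with strictly positive entries summing to `1`, the sequences defined by
`v^{m+1} = A w^m` and `w^{m+1} = v^{m+1} / (∑_j (v^{m+1})_j)` are well defined (each
normalizing denominator is strictly positive), the vectors `w^m` converge to `x`, and the
scalars `∑_j (v^m)_j` converge to `r`. -/
theorem perron_power_iteration (n : ℕ) (hn : 1 ≤ n) (A : Matrix (Fin n) (Fin n) ℝ)
    (hnonneg : ∀ i j, 0 ≤ A i j) (hpsd : A.PosSemidef)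
    (hprim : ∃ q : ℕ, 1 ≤ q ∧ ∀ i j, 0 < (A ^ q) i j)
    (r : ℝ)
    (hr : IsGreatest {lam : ℝ | ∃ v : Fin n → ℝ, v ≠ 0 ∧ A.mulVec v = lam • v} r) :
    ∃ x : Fin n → ℝ, (∀ i, 0 < x i) ∧ (∑ i, x i = 1) ∧ A.mulVec x = r • x ∧
      ∀ w v : ℕ → Fin n → ℝ,
        (∀ i, 0 < w 0 i) → (∑ i, w 0 i = 1) →
        (∀ m : ℕ, v (m + 1) = A.mulVec (w m)) →
        (∀ m : ℕ, w (m + 1) = (∑ j, v (m + 1) j)⁻¹ • v (m + 1)) →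
        (∀ m : ℕ, 0 < ∑ j, v (m + 1) j) ∧
          Tendsto w atTop (nhds x) ∧
          Tendsto (fun m => ∑ j, v (m + 1) j) atTop (nhds r) :=
  perron_power_iteration_general n A hnonneg hpsd hprim r hr
end
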